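/- arXiv:2201.03905 — 4 statements merged into one kernel-verified Lean document; each statement's English description precedes it below -/
import Mathlib

section
/- Let Z be a nonnegative real-valued random variable and X an exponential random variable with rate δ > 0, independent of Z, with P[Z > X] > 0. Then 1 + δ·E[Z − X | Z > X] = δ·E[Z] / P[Z > X]. -/
/-! For fixed `z ≥ 0` the tail formula gives `δ E[min(z, X)] = ∫₀^z δ P(X > t) dt = P(X < z)`,
because the exponential density `δ e^{-δt}` is `δ` times the survival function. Integrating in `z`
against the law of `Z` (by independence) yields `P(Z > X) = δ E[min(Z, X)]`, while
`E[Z - X; Z > X] = E[Z] - E[min(Z, X)]`; the identity is then algebra. -/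

open MeasureTheory ProbabilityTheory Set
open scoped ENNReal

namespace ProbabilityTheory

lemma expMeasure_Iio_zero (r : ℝ) : expMeasure r (Iio 0) = 0 := by
  rw [expMeasure, gammaMeasure, withDensity_apply _ measurableSet_Iio]
  exact lintegral_exponentialPDF_of_nonpos le_rfl

lemma ae_nonneg_expMeasure (r : ℝ) : ∀ᵐ x ∂expMeasure r, 0 ≤ x := by
  simpa [ae_iff, Iio] using expMeasure_Iio_zero r

lemma expMeasure_Ioi {r : ℝ} (hr : 0 < r) {t : ℝ} (ht : 0 ≤ t) :
    expMeasure r (Ioi t) = ENNReal.ofReal (Real.exp (-(r * t))) := by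
  have := isProbabilityMeasure_expMeasure hr
  have hexp : Real.exp (-(r * t)) ≤ 1 :=
    Real.exp_le_one_iff.2 (neg_nonpos.2 (mul_nonneg hr.le ht))
  rw [← compl_Iic, prob_compl_eq_one_sub measurableSet_Iic, ← ofReal_cdf, cdf_expMeasure_eq hr,
    if_pos ht, ← ENNReal.ofReal_one, ← ENNReal.ofReal_sub _ (sub_nonneg.2 hexp), sub_sub_cancel]

lemma ofReal_mul_lintegral_min_expMeasure {r : ℝ} (hr : 0 < r) {z : ℝ} (hz : 0 ≤ z) :
    ENNReal.ofReal r * ∫⁻ x, ENNReal.ofReal (min z x) ∂expMeasure r = expMeasure r (Iio z) := by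
  have h_nonneg : 0 ≤ᵐ[expMeasure r] fun x ↦ min z x := by
    filter_upwards [ae_nonneg_expMeasure r] with x hx using le_min hz hx
  have h_tail (t : ℝ) :
      expMeasure r {x | t < min z x} = (Iio z).indicator (expMeasure r <| Ioi ·) t := by
    by_cases htz : t < z
    · simp [htz, Ioi]
    · simp [htz]
  calc ENNReal.ofReal r * ∫⁻ x, ENNReal.ofReal (min z x) ∂expMeasure r
      = ENNReal.ofReal r * ∫⁻ t in Ioo 0 z, expMeasure r (Ioi t) := by
        rw [lintegral_eq_lintegral_meas_lt _ h_nonneg (by fun_prop)]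
        simp_rw [h_tail]
        rw [lintegral_indicator measurableSet_Iio, Measure.restrict_restrict measurableSet_Iio,
          Iio_inter_Ioi]
    _ = ∫⁻ t in Ico 0 z, exponentialPDF r t := by
        rw [← lintegral_const_mul' _ _ ENNReal.ofReal_ne_top, setLIntegral_congr Ioo_ae_eq_Ico]
        refine setLIntegral_congr_fun measurableSet_Ico fun t ht ↦ ?_
        rw [expMeasure_Ioi hr ht.1, exponentialPDF_of_nonneg ht.1, ENNReal.ofReal_mul hr.le]
    _ = expMeasure r (Iio z) := by
        rw [← measure_inter_conull (t := Ici 0) (by rw [compl_Ici, expMeasure_Iio_zero]),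
          Iio_inter_Ici, expMeasure, gammaMeasure, withDensity_apply _ measurableSet_Ico]
        rfl

section Independent

variable {Ω α β : Type*} [MeasurableSpace Ω] [MeasurableSpace α] [MeasurableSpace β]
  {P : Measure Ω} [IsFiniteMeasure P]

lemma IndepFun.lintegral_comp_eq_lintegral_lintegral_map {Z : Ω → α} {X : Ω → β}
    (h : IndepFun Z X P) (hZ : Measurable Z) (hX : Measurable X) {g : α × β → ℝ≥0∞}
    (hg : Measurable g) :
    ∫⁻ ω, g (Z ω, X ω) ∂P = ∫⁻ z, ∫⁻ x, g (z, x) ∂P.map X ∂P.map Z := by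
  rw [← lintegral_map hg (hZ.prodMk hX),
    h.map_prod_eq_prod_map_map hZ.aemeasurable hX.aemeasurable, lintegral_prod _ hg.aemeasurable]

lemma IndepFun.measure_lt_eq_lintegral_map {Z X : Ω → ℝ} (h : IndepFun Z X P)
    (hZ : Measurable Z) (hX : Measurable X) :
    P {ω | X ω < Z ω} = ∫⁻ z, P.map X (Iio z) ∂P.map Z := by
  have hS : MeasurableSet {p : ℝ × ℝ | p.2 < p.1} := measurableSet_lt measurable_snd measurable_fst
  calc P {ω | X ω < Z ω} = P.map (fun ω ↦ (Z ω, X ω)) {p | p.2 < p.1} :=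
        (Measure.map_apply (hZ.prodMk hX) hS).symm
    _ = ((P.map Z).prod (P.map X)) {p | p.2 < p.1} := by
        rw [h.map_prod_eq_prod_map_map hZ.aemeasurable hX.aemeasurable]
    _ = ∫⁻ z, P.map X (Iio z) ∂P.map Z := Measure.prod_apply hS

end Independent

end ProbabilityTheory

lemma MeasureTheory.setIntegral_lt_sub_eq_integral_sub_min {α : Type*} [MeasurableSpace α]
    {μ : Measure α} {f g : α → ℝ}
    (hf : Integrable f μ) (hfg : Integrable (fun a ↦ min (f a) (g a)) μ)
    (hs : MeasurableSet {a | g a < f a}) :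
    ∫ a in {a | g a < f a}, (f a - g a) ∂μ = ∫ a, f a ∂μ - ∫ a, min (f a) (g a) ∂μ := by
  rw [← integral_sub hf hfg, ← integral_indicator hs]
  congr with a
  by_cases hga : g a < f a
  · simp [hga, min_eq_right hga.le]
  · simp [hga, min_eq_left (not_lt.1 hga)]

/-- For a nonnegative random variable `Z` with finite mean and an independent
exponential random variable `X` with rate `δ > 0`, if `P[Z > X] > 0` then
`1 + δ·E[Z − X | Z > X] = δ·E[Z] / P[Z > X]`. -/
theorem stmt_0 {Ω : Type*} [MeasureSpace Ω] [IsProbabilityMeasure (ℙ : Measure Ω)]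
    (δ : ℝ) (hδ : 0 < δ) (Z X : Ω → ℝ)
    (hZmeas : Measurable Z) (hXmeas : Measurable X)
    (hZnonneg : ∀ ω, 0 ≤ Z ω)
    (hZint : Integrable Z)
    (hX : Measure.map X ℙ = expMeasure δ)
    (hindep : IndepFun Z X)
    (hpos : 0 < (ℙ {ω | X ω < Z ω}).toReal) :
    1 + δ * ((∫ ω in {ω | X ω < Z ω}, (Z ω - X ω)) / (ℙ {ω | X ω < Z ω}).toReal)
      = δ * (∫ ω, Z ω) / (ℙ {ω | X ω < Z ω}).toReal := by
  have hmin_nonneg : 0 ≤ᵐ[ℙ] fun ω ↦ min (Z ω) (X ω) := by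
    filter_upwards [ae_of_ae_map hXmeas.aemeasurable (hX ▸ ae_nonneg_expMeasure δ)] with ω hω
    exact le_min (hZnonneg ω) hω
  have hmin_int : Integrable (fun ω ↦ min (Z ω) (X ω)) :=
    hZint.mono' (hZmeas.min hXmeas).aestronglyMeasurable <| by
      filter_upwards [hmin_nonneg] with ω hω
      rw [Real.norm_of_nonneg hω]
      exact min_le_left _ _
  have hZ_map : ∀ᵐ z ∂(ℙ : Measure Ω).map Z, 0 ≤ z :=
    (ae_map_iff hZmeas.aemeasurable measurableSet_Ici).2 (ae_of_all _ hZnonneg)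
  have hmeasure :
      ℙ {ω | X ω < Z ω} = ENNReal.ofReal δ * ∫⁻ ω, ENNReal.ofReal (min (Z ω) (X ω)) := by
    rw [hindep.measure_lt_eq_lintegral_map hZmeas hXmeas,
      hindep.lintegral_comp_eq_lintegral_lintegral_map hZmeas hXmeas
        (g := fun p ↦ ENNReal.ofReal (min p.1 p.2)) (by fun_prop),
      ← lintegral_const_mul' _ _ ENNReal.ofReal_ne_top, hX]
    refine lintegral_congr_ae ?_
    filter_upwards [hZ_map] with z hz
    exact (ofReal_mul_lintegral_min_expMeasure hδ hz).symm
  have hmeasure_real : (ℙ {ω | X ω < Z ω}).toReal = δ * ∫ ω, min (Z ω) (X ω) := by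
    rw [hmeasure, ENNReal.toReal_mul, ENNReal.toReal_ofReal hδ.le,
      integral_eq_lintegral_of_nonneg_ae hmin_nonneg hmin_int.aestronglyMeasurable]
  rw [setIntegral_lt_sub_eq_integral_sub_min hZint hmin_int (measurableSet_lt hXmeas hZmeas)]
  field_simp
  linarith
end

section
/- For fixed integer m ≥ 1 and δ > 0, the function y ↦ δy(1−y^m)/(δy(1−y^m) + y^m(1−y)) is decreasing on (0,1). -/
open Set

/-- For fixed `m ≥ 1` and `δ > 0`, the map
`y ↦ δy(1−y^m)/(δy(1−y^m) + y^m(1−y))` is decreasing on `(0,1)`. -/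
theorem stmt_4 (m : ℕ) (hm : 1 ≤ m) (δ : ℝ) (hδ : 0 < δ) :
    AntitoneOn
      (fun y : ℝ => δ * y * (1 - y ^ m) / (δ * y * (1 - y ^ m) + y ^ m * (1 - y)))
      (Ioo (0:ℝ) 1) := by
  intro a ha b hb hab
  obtain ⟨ha0, ha1⟩ := ha
  obtain ⟨hb0, hb1⟩ := hb
  set sa : ℝ := ∑ k ∈ Finset.range m, a ^ k with hsa
  set sb : ℝ := ∑ k ∈ Finset.range m, b ^ k with hsb
  have hga : (1 - a) * sa = 1 - a ^ m := by
    have := geom_sum_mul a m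
    nlinarith [this]
  have hgb : (1 - b) * sb = 1 - b ^ m := by
    have := geom_sum_mul b m
    nlinarith [this]
  have hsapos : 0 < sa := by
    apply Finset.sum_pos
    · intro k _; positivity
    · exact ⟨0, Finset.mem_range.mpr (by omega)⟩
  have hsbpos : 0 < sb := by
    apply Finset.sum_pos
    · intro k _; positivity
    · exact ⟨0, Finset.mem_range.mpr (by omega)⟩
  have h1a : (0:ℝ) < 1 - a := by linarith
  have h1b : (0:ℝ) < 1 - b := by linarith
  have h1am : 0 < 1 - a ^ m := by rw [← hga]; positivity
  have h1bm : 0 < 1 - b ^ m := by rw [← hgb]; positivity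
  have hDa : 0 < δ * a * (1 - a ^ m) + a ^ m * (1 - a) := by positivity
  have hDb : 0 < δ * b * (1 - b ^ m) + b ^ m * (1 - b) := by positivity
  -- termwise inequality
  have hterm : ∀ k ∈ Finset.range m, b ^ (k + 1) * a ^ m ≤ a ^ (k + 1) * b ^ m := by
    intro k hk
    have hkm : k < m := Finset.mem_range.mp hk
    have hpow : a ^ (m - k - 1) ≤ b ^ (m - k - 1) :=
      pow_le_pow_left₀ ha0.le hab _
    have ham : a ^ m = a ^ (k + 1) * a ^ (m - k - 1) := by
      rw [← pow_add]; congr 1; omega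
    have hbm : b ^ m = b ^ (k + 1) * b ^ (m - k - 1) := by
      rw [← pow_add]; congr 1; omega
    rw [ham, hbm]
    have h1 : (0:ℝ) ≤ a ^ (k + 1) * b ^ (k + 1) := by positivity
    calc b ^ (k + 1) * (a ^ (k + 1) * a ^ (m - k - 1))
        = a ^ (k + 1) * b ^ (k + 1) * a ^ (m - k - 1) := by ring
      _ ≤ a ^ (k + 1) * b ^ (k + 1) * b ^ (m - k - 1) := by
          exact mul_le_mul_of_nonneg_left hpow h1
      _ = a ^ (k + 1) * (b ^ (k + 1) * b ^ (m - k - 1)) := by ring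
  have hsum : b * sb * a ^ m ≤ a * sa * b ^ m := by
    have := Finset.sum_le_sum hterm
    calc b * sb * a ^ m = ∑ k ∈ Finset.range m, b ^ (k + 1) * a ^ m := by
          rw [hsb, Finset.mul_sum, Finset.sum_mul]
          refine Finset.sum_congr rfl fun k _ => ?_
          rw [pow_succ]; ring
      _ ≤ ∑ k ∈ Finset.range m, a ^ (k + 1) * b ^ m := this
      _ = a * sa * b ^ m := by
          rw [hsa, Finset.mul_sum, Finset.sum_mul]
          refine Finset.sum_congr rfl fun k _ => ?_
          rw [pow_succ]; ring
  simp only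
  rw [div_le_div_iff₀ hDb hDa, ← hga, ← hgb]
  nlinarith [mul_le_mul_of_nonneg_left hsum (by positivity : (0:ℝ) ≤ δ * (1 - a) * (1 - b))]
end

section
/- Fix δ > 0 and λ ∈ (0,1) with λ/(1−λ) > δ. The function y ↦ log(1/y + (λ/(δ(1−λ)) − 1)·(1−y)/y) / log(1/y) is increasing in y on (0,1), tends to (1/δ)·log(1 + (λ/((1−λ)δ))·(e^δ − 1)) as y → e^{−δ}, and tends to λ/((1−λ)δ) as y → 1⁻. -/
/-!
Writing `c = λ/(δ(1-λ)) - 1 ≥ 0`, the function equals `1 + log (1 + c(1-y)) / (-log y)` on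
`(0,1)`. The derivative of the second summand has the sign of `c y log y + A log A` with
`A = 1 + c(1-y)`, which is nonnegative because `t log t ≥ t - 1` and `c(y-1) + (A-1) = 0`.
The value `y = e^{-δ}` is an interior point, and at `y = 1` both logarithms vanish, so the
limit is the ratio `c` of their derivatives.
-/

open Real Set Filter Topology

theorem tendsto_div_of_hasDerivAt_of_eq_zero {f g : ℝ → ℝ} {f' g' a : ℝ}
    (hf : HasDerivAt f f' a) (hg : HasDerivAt g g' a) (hfa : f a = 0) (hga : g a = 0)
    (hg' : g' ≠ 0) : Tendsto (fun x => f x / g x) (𝓝[≠] a) (𝓝 (f' / g')) := by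
  refine ((hasDerivAt_iff_tendsto_slope.mp hf).div
    (hasDerivAt_iff_tendsto_slope.mp hg) hg').congr' ?_
  filter_upwards [self_mem_nhdsWithin] with x hx
  have hxa : x - a ≠ 0 := sub_ne_zero.mpr hx
  simp only [Pi.div_apply, slope_def_field, hfa, hga, sub_zero]
  field_simp

noncomputable def logRatio (c y : ℝ) : ℝ :=
  log (1 + c * (1 - y)) / -log y

section logRatio

variable {c : ℝ}

lemma one_add_mul_one_sub_pos (hc : 0 ≤ c) {y : ℝ} (hy : y < 1) : 0 < 1 + c * (1 - y) := by
  nlinarith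

lemma hasDerivAt_log_one_add_mul_one_sub {x : ℝ} (hx : 1 + c * (1 - x) ≠ 0) :
    HasDerivAt (fun y => log (1 + c * (1 - y))) (-c / (1 + c * (1 - x))) x :=
  ((((hasDerivAt_id x).const_sub 1).const_mul c).const_add 1).log hx
    |>.congr_deriv (by simp only [id]; ring)

lemma log_one_div_add_div_div_log_one_div (hc : 0 ≤ c) {y : ℝ} (hy : y ∈ Ioo (0:ℝ) 1) :
    log (1 / y + c * (1 - y) / y) / log (1 / y) = logRatio c y + 1 := by
  obtain ⟨hy0, hy1⟩ := hy
  have hlog : log y ≠ 0 := (log_neg hy0 hy1).ne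
  have harg : 1 / y + c * (1 - y) / y = (1 + c * (1 - y)) / y := by field_simp
  rw [harg, log_div (one_add_mul_one_sub_pos hc hy1).ne' hy0.ne', one_div, log_inv, logRatio]
  field_simp
  ring

lemma hasDerivAt_logRatio (hc : 0 ≤ c) {x : ℝ} (hx : x ∈ Ioo (0:ℝ) 1) :
    HasDerivAt (logRatio c)
      ((c * x * log x + (1 + c * (1 - x)) * log (1 + c * (1 - x))) /
        (x * (1 + c * (1 - x)) * log x ^ 2)) x := by
  obtain ⟨hx0, hx1⟩ := hx
  have hA := one_add_mul_one_sub_pos hc hx1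
  have hlog : log x ≠ 0 := (log_neg hx0 hx1).ne
  have hden : HasDerivAt (fun y => -log y) (-x⁻¹) x := (hasDerivAt_log hx0.ne').neg
  refine ((hasDerivAt_log_one_add_mul_one_sub hA.ne').div hden (neg_ne_zero.mpr hlog))
    |>.congr_deriv ?_
  field_simp
  ring

lemma monotoneOn_logRatio (hc : 0 ≤ c) : MonotoneOn (logRatio c) (Ioo 0 1) := by
  refine monotoneOn_of_hasDerivWithinAt_nonneg (convex_Ioo 0 1)
    (fun x hx => (hasDerivAt_logRatio hc hx).continuousAt.continuousWithinAt)
    (fun x hx => (hasDerivAt_logRatio hc (interior_subset hx)).hasDerivWithinAt) ?_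
  intro x hx
  rw [interior_Ioo] at hx
  obtain ⟨hx0, hx1⟩ := hx
  have hA := one_add_mul_one_sub_pos hc hx1
  have hxlog := mul_le_mul_of_nonneg_left (self_sub_one_le_mul_log hx0.le) hc
  have hAlog := self_sub_one_le_mul_log hA.le
  have hnum : 0 ≤ c * x * log x + (1 + c * (1 - x)) * log (1 + c * (1 - x)) := by nlinarith
  positivity

lemma tendsto_logRatio_nhdsLT_one (c : ℝ) : Tendsto (logRatio c) (𝓝[<] 1) (𝓝 c) := by
  have h := tendsto_div_of_hasDerivAt_of_eq_zero
    (hasDerivAt_log_one_add_mul_one_sub (c := c) (x := 1) (by simp))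
    (hasDerivAt_log one_ne_zero).neg (by simp) (by simp) (by norm_num)
  simp only [sub_self, mul_zero, add_zero, div_one, inv_one, neg_div_neg_eq] at h
  exact h.mono_left (nhdsWithin_mono _ fun y hy => ne_of_lt hy)

lemma logRatio_exp_neg_add_one {δ : ℝ} (hc : 0 ≤ c) (hδ : 0 < δ) :
    logRatio c (exp (-δ)) + 1 = 1 / δ * log (1 + (c + 1) * (exp δ - 1)) := by
  have hA := one_add_mul_one_sub_pos hc (exp_lt_one_iff.mpr (neg_lt_zero.mpr hδ))
  have harg : 1 + (c + 1) * (exp δ - 1) = exp δ * (1 + c * (1 - exp (-δ))) := by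
    rw [exp_neg]; field_simp; ring
  rw [harg, log_mul (exp_pos δ).ne' hA.ne', log_exp, logRatio, log_exp]
  field_simp
  ring

end logRatio

theorem stmt_6_general (δ lam : ℝ) (hδ : 0 < δ)
    (hload : δ < lam / (1 - lam)) :
    MonotoneOn
      (fun y : ℝ => log (1 / y + (lam / (δ * (1 - lam)) - 1) * (1 - y) / y) / log (1 / y))
      (Ioo (0:ℝ) 1) ∧
    Tendsto
      (fun y : ℝ => log (1 / y + (lam / (δ * (1 - lam)) - 1) * (1 - y) / y) / log (1 / y))
      (𝓝[Ioo (0:ℝ) 1] (exp (-δ)))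
      (𝓝 ((1 / δ) * log (1 + lam / ((1 - lam) * δ) * (exp δ - 1)))) ∧
    Tendsto
      (fun y : ℝ => log (1 / y + (lam / (δ * (1 - lam)) - 1) * (1 - y) / y) / log (1 / y))
      (𝓝[<] (1:ℝ)) (𝓝 (lam / ((1 - lam) * δ))) := by
  set c := lam / (δ * (1 - lam)) - 1
  have hc1 : lam / ((1 - lam) * δ) = c + 1 := by rw [mul_comm]; ring
  have hc : 0 ≤ c := by
    rw [sub_nonneg, mul_comm, ← div_div, le_div_iff₀ hδ, one_mul]
    exact hload.le
  have heq : EqOn (fun y => log (1 / y + c * (1 - y) / y) / log (1 / y))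
      (fun y => logRatio c y + 1) (Ioo 0 1) :=
    fun y hy => log_one_div_add_div_div_log_one_div hc hy
  have hexp : exp (-δ) ∈ Ioo (0:ℝ) 1 :=
    ⟨exp_pos _, exp_lt_one_iff.mpr (neg_lt_zero.mpr hδ)⟩
  refine ⟨((monotoneOn_logRatio hc).add_const 1).congr heq.symm, ?_, ?_⟩
  · rw [hc1, ← logRatio_exp_neg_add_one hc hδ]
    refine ((hasDerivAt_logRatio hc hexp).continuousAt.tendsto.add_const 1).mono_left
      nhdsWithin_le_nhds |>.congr' ?_
    filter_upwards [self_mem_nhdsWithin] with y hy using (heq hy).symm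
  · rw [hc1]
    refine ((tendsto_logRatio_nhdsLT_one c).add_const 1).congr' ?_
    filter_upwards [Ioo_mem_nhdsLT zero_lt_one] with y hy using (heq hy).symm

/-- For `δ > 0` and `λ ∈ (0,1)` with `λ/(1−λ) > δ`, the map
`y ↦ log(1/y + (λ/(δ(1−λ)) − 1)(1−y)/y)/log(1/y)` is increasing on `(0,1)`,
tends to `(1/δ)log(1 + (λ/((1−λ)δ))(e^δ − 1))` as `y → e^{−δ}` and tends to
`λ/((1−λ)δ)` as `y → 1⁻`. -/
theorem stmt_6 (δ lam : ℝ) (hδ : 0 < δ) (hlam : lam ∈ Set.Ioo (0:ℝ) 1)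
    (hload : δ < lam / (1 - lam)) :
    MonotoneOn
      (fun y : ℝ => log (1 / y + (lam / (δ * (1 - lam)) - 1) * (1 - y) / y) / log (1 / y))
      (Ioo (0:ℝ) 1) ∧
    Tendsto
      (fun y : ℝ => log (1 / y + (lam / (δ * (1 - lam)) - 1) * (1 - y) / y) / log (1 / y))
      (𝓝[Ioo (0:ℝ) 1] (exp (-δ)))
      (𝓝 ((1 / δ) * log (1 + lam / ((1 - lam) * δ) * (exp δ - 1)))) ∧
    Tendsto
      (fun y : ℝ => log (1 / y + (lam / (δ * (1 - lam)) - 1) * (1 - y) / y) / log (1 / y))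
      (𝓝[<] (1:ℝ)) (𝓝 (lam / ((1 - lam) * δ))) :=
  stmt_6_general δ lam hδ hload
end

section
/- Fix δ > 0 and λ ∈ (0,1) with λ/(1−λ) > δ. Then lim_{ε→0⁺} m̃(y(ε)) = λ/((1−λ)δ), where y(ε) = (1−ε)²/((1−ε)+δε) + ε²/(ε+(1−ε)δ) and m̃(y) = 1 + log(1 + ((λ/(1−λ) − δ)/δ)·(1−y)) / log(1/y). -/
open Real Filter Topology

/-!
As `ε → 0⁺` we have `y(ε) → 1⁻`, so with `u = 1 - y(ε) → 0⁺` and `c = (λ/(1−λ) − δ)/δ` the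
quotient in `m̃` is `log (1 + c u) / (-log (1 - u))`. Both logarithms are `~ (slope) · u`
near `0`, so the quotient tends to `c`, and `1 + c = λ/((1−λ)δ)`.
-/

lemma tendsto_log_one_add_mul_div_self (c : ℝ) :
    Tendsto (fun u : ℝ => log (1 + c * u) / u) (𝓝[≠] 0) (𝓝 c) := by
  have hderiv : HasDerivAt (fun u : ℝ => log (1 + c * u)) c 0 := by
    simpa using (((hasDerivAt_id (0 : ℝ)).const_mul c).const_add 1).log (by norm_num)
  refine (hasDerivAt_iff_tendsto_slope.mp hderiv).congr fun u => ?_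
  simp [slope_def_field]

lemma tendsto_log_one_add_mul_div_log_one_add_mul (c : ℝ) {d : ℝ} (hd : d ≠ 0) :
    Tendsto (fun u : ℝ => log (1 + c * u) / log (1 + d * u)) (𝓝[≠] 0) (𝓝 (c / d)) := by
  refine ((tendsto_log_one_add_mul_div_self c).div
    (tendsto_log_one_add_mul_div_self d) hd).congr' ?_
  filter_upwards [self_mem_nhdsWithin] with u hu
  exact div_div_div_cancel_right₀ hu _ _

/-- The quantity `y(ε)` for the order-2 hyperexponential job-size distribution. -/
noncomputable def hyperexpTwoY (δ ε : ℝ) : ℝ :=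
  (1 - ε) ^ 2 / ((1 - ε) + δ * ε) + ε ^ 2 / (ε + (1 - ε) * δ)

section hyperexpTwoY

variable {δ : ℝ}

lemma hyperexpTwoY_lt_one (hδ : 0 < δ) {ε : ℝ} (hε₀ : 0 < ε) (hε₁ : ε < 1) :
    hyperexpTwoY δ ε < 1 := by
  have hpos : 0 < δ * ε * (1 - ε) := mul_pos (mul_pos hδ hε₀) (sub_pos.mpr hε₁)
  have h₁ : (1 - ε) ^ 2 / ((1 - ε) + δ * ε) < 1 - ε := by
    rw [div_lt_iff₀ (by nlinarith)]; nlinarith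
  have h₂ : ε ^ 2 / (ε + (1 - ε) * δ) < ε := by
    rw [div_lt_iff₀ (by nlinarith)]; nlinarith
  unfold hyperexpTwoY
  linarith

lemma continuousAt_hyperexpTwoY_zero (hδ : δ ≠ 0) : ContinuousAt (hyperexpTwoY δ) 0 := by
  unfold hyperexpTwoY
  apply ContinuousAt.add
  · exact ContinuousAt.div (by fun_prop) (by fun_prop) (by norm_num)
  · exact ContinuousAt.div (by fun_prop) (by fun_prop) (by simpa using hδ)

lemma hyperexpTwoY_zero : hyperexpTwoY δ 0 = 1 := by
  simp [hyperexpTwoY]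

lemma tendsto_one_sub_hyperexpTwoY (hδ : 0 < δ) :
    Tendsto (fun ε => 1 - hyperexpTwoY δ ε) (𝓝[>] 0) (𝓝[>] 0) := by
  rw [tendsto_nhdsWithin_iff]
  constructor
  · have hlim := ((continuousAt_hyperexpTwoY_zero hδ.ne').tendsto.mono_left
      (nhdsWithin_le_nhds (s := Set.Ioi 0))).const_sub 1
    rwa [hyperexpTwoY_zero, sub_self] at hlim
  · filter_upwards [Ioo_mem_nhdsGT (zero_lt_one' ℝ)] with ε ⟨hε₀, hε₁⟩
    exact sub_pos.mpr (hyperexpTwoY_lt_one hδ hε₀ hε₁)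

end hyperexpTwoY

theorem stmt_10_general (δ lam : ℝ) (hδ : 0 < δ) :
    Tendsto
      (fun ε : ℝ =>
        1 + log (1 + ((lam / (1 - lam) - δ) / δ) *
              (1 - ((1 - ε) ^ 2 / ((1 - ε) + δ * ε) + ε ^ 2 / (ε + (1 - ε) * δ)))) /
            log (1 / ((1 - ε) ^ 2 / ((1 - ε) + δ * ε) + ε ^ 2 / (ε + (1 - ε) * δ))))
      (𝓝[>] (0:ℝ)) (𝓝 (lam / ((1 - lam) * δ))) := by
  set c := (lam / (1 - lam) - δ) / δ with hc
  have hratio := (tendsto_log_one_add_mul_div_log_one_add_mul c (d := -1) (by norm_num)).comp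
    ((tendsto_one_sub_hyperexpTwoY hδ).mono_right (nhdsWithin_mono _ fun u hu => ne_of_gt hu))
  have hlimit : lam / ((1 - lam) * δ) = 1 + -(c / -1) := by
    rw [div_neg, neg_neg, div_one, hc, sub_div, div_self hδ.ne', div_div]
    ring
  rw [hlimit]
  have hlog (y : ℝ) : log (1 + -1 * (1 - y)) = -log (1 / y) := by
    rw [one_div, log_inv, neg_neg]
    ring_nf
  refine (hratio.neg.const_add 1).congr fun ε => ?_
  simp only [Function.comp, hyperexpTwoY, hlog, div_neg, neg_neg]

/-- For `δ > 0` and `λ ∈ (0,1)` with `λ/(1−λ) > δ`,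
`m̃(y(ε)) → λ/((1−λ)δ)` as `ε → 0⁺`, where
`y(ε) = (1−ε)²/((1−ε)+δε) + ε²/(ε+(1−ε)δ)` and
`m̃(y) = 1 + log(1 + ((λ/(1−λ) − δ)/δ)(1−y))/log(1/y)`. -/
theorem stmt_10 (δ lam : ℝ) (hδ : 0 < δ) (hlam : lam ∈ Set.Ioo (0:ℝ) 1)
    (hload : δ < lam / (1 - lam)) :
    Tendsto
      (fun ε : ℝ =>
        1 + log (1 + ((lam / (1 - lam) - δ) / δ) *
              (1 - ((1 - ε) ^ 2 / ((1 - ε) + δ * ε) + ε ^ 2 / (ε + (1 - ε) * δ)))) /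
            log (1 / ((1 - ε) ^ 2 / ((1 - ε) + δ * ε) + ε ^ 2 / (ε + (1 - ε) * δ))))
      (𝓝[>] (0:ℝ)) (𝓝 (lam / ((1 - lam) * δ))) :=
  stmt_10_general δ lam hδ
end
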